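/- Let n ≥ 3 be a positive integer, let p be a prime number, and let a be the exponent of p in the prime factorization of n (a = 0 if p does not divide n). Then G(n·p) > G(n) holds if and only if (log n)^E > log n + log p, where E = (p^(a+2) − 1)/(p^(a+2) − p) and log denotes the natural logarithm. -/

import Mathlib

open ArithmeticFunction Real
open scoped ArithmeticFunction.sigma

/-- The Grönwall function `G(n) = σ(n) / (n · log log n)`. -/
noncomputable def G (n : ℕ) : ℝ := (σ 1 n : ℝ) / (n * Real.log (Real.log n))

/-!
Write `n = p ^ a * m` with `p ∤ m`. Multiplicativity of `σ` gives
`σ(n p) / σ(n) = σ(p ^ (a + 1)) / σ(p ^ a) = p E`, so `G(n p) > G(n)` becomes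
`log log (n p) < E log log n`, and exponentiating turns this into `log n + log p < (log n) ^ E`.
-/

theorem sigma_one_prime_pow_mul_sub_one {p : ℕ} (hp : p.Prime) (i : ℕ) :
    (σ 1 (p ^ i) : ℝ) * (p - 1) = (p : ℝ) ^ (i + 1) - 1 := by
  rw [sigma_one_apply_prime_pow hp]
  push_cast
  exact geom_sum_mul (p : ℝ) (i + 1)

theorem sigma_one_prime_pow_succ {p : ℕ} (hp : p.Prime) (i : ℕ) :
    (σ 1 (p ^ (i + 1)) : ℝ) =
      σ 1 (p ^ i) * p * (((p : ℝ) ^ (i + 2) - 1) / ((p : ℝ) ^ (i + 2) - p)) := by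
  have hp1 : (1 : ℝ) < p := by exact_mod_cast hp.one_lt
  have hσ : (σ 1 (p ^ i) : ℝ) ≠ 0 := by
    exact_mod_cast (sigma_pos 1 _ (pow_ne_zero i hp.ne_zero)).ne'
  have hden : (p : ℝ) ^ (i + 2) - p = p * ((p : ℝ) ^ (i + 1) - 1) := by ring
  have hcur := sigma_one_prime_pow_mul_sub_one hp i
  have hnext := sigma_one_prime_pow_mul_sub_one hp (i + 1)
  rw [hden, ← hcur, ← hnext]
  field_simp [hσ, (by linarith : (p : ℝ) - 1 ≠ 0), (by linarith : (p : ℝ) ≠ 0)]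

theorem sigma_one_mul_prime_mul_sigma_one_prime_pow {n p : ℕ} (hp : p.Prime) (hn : n ≠ 0) :
    σ 1 (n * p) * σ 1 (p ^ n.factorization p) = σ 1 n * σ 1 (p ^ (n.factorization p + 1)) := by
  set a := n.factorization p
  set m := n / p ^ a
  have hnm : p ^ a * m = n := Nat.ordProj_mul_ordCompl_eq_self n p
  have hcop (k : ℕ) : Nat.Coprime (p ^ k) m := (Nat.coprime_ordCompl hp hn).pow_left k
  have hnp : n * p = p ^ (a + 1) * m := by rw [← hnm]; ring
  rw [hnp, ← hnm, isMultiplicative_sigma.map_mul_of_coprime (hcop _),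
    isMultiplicative_sigma.map_mul_of_coprime (hcop _)]
  ring

theorem sigma_one_mul_prime {n p : ℕ} (hp : p.Prime) (hn : n ≠ 0) :
    (σ 1 (n * p) : ℝ) = σ 1 n * p *
      (((p : ℝ) ^ (n.factorization p + 2) - 1) / ((p : ℝ) ^ (n.factorization p + 2) - p)) := by
  have hpos : (0 : ℝ) < σ 1 (p ^ n.factorization p) := by
    exact_mod_cast sigma_pos 1 _ (pow_ne_zero _ hp.ne_zero)
  have h : (σ 1 (n * p) : ℝ) * σ 1 (p ^ n.factorization p) =
      σ 1 n * σ 1 (p ^ (n.factorization p + 1)) := by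
    exact_mod_cast sigma_one_mul_prime_mul_sigma_one_prime_pow hp hn
  rw [sigma_one_prime_pow_succ hp] at h
  apply mul_right_cancel₀ hpos.ne'
  rw [h]
  ring

theorem G_lt_G_mul_iff {n k : ℕ} (hn : 0 < n) (hk : 0 < k)
    (hlog : 0 < Real.log (Real.log n)) (hlog' : 0 < Real.log (Real.log (n * k : ℕ))) :
    G n < G (n * k) ↔
      (σ 1 n : ℝ) * k * Real.log (Real.log (n * k : ℕ)) < σ 1 (n * k) * Real.log (Real.log n) := by
  have hn' : (0 : ℝ) < n := by exact_mod_cast hn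
  unfold G
  set X := Real.log (Real.log n)
  set X' := Real.log (Real.log (n * k : ℕ))
  rw [div_lt_div_iff₀ (by positivity) (by positivity), Nat.cast_mul,
    show (σ 1 n : ℝ) * (n * k * X') = σ 1 n * k * X' * n by ring,
    show (σ 1 (n * k) : ℝ) * (n * X) = σ 1 (n * k) * X * n by ring,
    mul_lt_mul_iff_of_pos_right hn']

theorem one_lt_log_natCast {n : ℕ} (hn : 3 ≤ n) : 1 < Real.log n := by
  rw [Real.lt_log_iff_exp_lt (by positivity)]
  exact Real.exp_one_lt_three.trans_le (by exact_mod_cast hn)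

theorem gronwall_increase_iff_rpow (n : ℕ) (hn : 3 ≤ n) (p : ℕ) (hp : p.Prime)
    (E : ℝ) (hE : E = ((p : ℝ) ^ (n.factorization p + 2) - 1) /
      ((p : ℝ) ^ (n.factorization p + 2) - p)) :
    G (n * p) > G n ↔ (Real.log n) ^ E > Real.log n + Real.log p := by
  have hlogn : 1 < Real.log n := one_lt_log_natCast hn
  have hlogp : 0 < Real.log p := Real.log_pos (by exact_mod_cast hp.one_lt)
  have hlognp : Real.log (n * p : ℕ) = Real.log n + Real.log p := by
    push_cast
    exact Real.log_mul (by positivity) (by exact_mod_cast hp.ne_zero)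
  have hσ : (0 : ℝ) < σ 1 n * p := by
    have := sigma_pos 1 n (by omega)
    have := hp.pos
    positivity
  have hloglognp : 0 < Real.log (Real.log (n * p : ℕ)) := by
    rw [hlognp]
    exact Real.log_pos (by linarith)
  rw [gt_iff_lt, G_lt_G_mul_iff (by omega) hp.pos (Real.log_pos hlogn) hloglognp,
    sigma_one_mul_prime hp (by omega), ← hE, hlognp, mul_assoc _ E, mul_lt_mul_iff_right₀ hσ,
    gt_iff_lt, Real.lt_rpow_iff_log_lt (by linarith) (by linarith)]
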